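/- Equivalently, for every bipartite graph G, (a(G) - α(G))² - (2μ(G) + 4)(a(G) - α(G)) + μ(G)² ≥ 0, and since a(G) - α(G) ≤ μ(G), this forces a(G) - α(G) ≤ 2 + μ(G) - 2√(1 + μ(G)). -/

import Mathlib

/-!
Take a set `A` of `a = a(G)` vertices whose degree sum is at most `m(G)`. Counting incidences
edge by edge, `A` spans at most as many edges as its complement, and in a bipartite graph the
complement spans at most `(n - a)² / 4` of them. Deleting one endpoint of every edge inside `A`
leaves an independent set, so `a - α ≤ (n - a)² / 4`. König's theorem `n ≤ α + μ` turns this into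
`4x ≤ (μ - x)²` for `x = a - α ≤ μ`, and the roots of this quadratic are `(√(1 + μ) ∓ 1)²`.
-/

open Finset

namespace AnnPaper

variable {V : Type*}

/-- A finset of vertices is independent: no two of its members are adjacent. -/
def IsIndepFinset (G : SimpleGraph V) (s : Finset V) : Prop :=
  ∀ a ∈ s, ∀ b ∈ s, ¬ G.Adj a b

/-- The independence number `α(G)`. -/
noncomputable def indepNum (G : SimpleGraph V) : ℕ :=
  sSup {k | ∃ s : Finset V, IsIndepFinset G s ∧ s.card = k}

/-- A finset of edges is a matching: edges of `G`, pairwise vertex-disjoint. -/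
def IsMatchingFinset (G : SimpleGraph V) (s : Finset (Sym2 V)) : Prop :=
  (↑s ⊆ G.edgeSet) ∧ ∀ e ∈ s, ∀ f ∈ s, e ≠ f → ∀ v : V, v ∈ e → v ∉ f

/-- The matching number `μ(G)`. -/
noncomputable def matchNum (G : SimpleGraph V) : ℕ :=
  sSup {k | ∃ s : Finset (Sym2 V), IsMatchingFinset G s ∧ s.card = k}

/-- The number of edges `m(G)`. -/
noncomputable def edgeCount (G : SimpleGraph V) : ℕ := G.edgeSet.ncard

/-- The degree of a vertex. -/
noncomputable def deg (G : SimpleGraph V) (v : V) : ℕ := (G.neighborSet v).ncard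

/-- The annihilation number `a(G)`: the largest `k` such that the sum of the `k`
smallest degrees is at most `m(G)`; equivalently, the largest cardinality of a
set of vertices whose degree sum is at most `m(G)`. -/
noncomputable def annNum (G : SimpleGraph V) : ℕ :=
  sSup {k | ∃ A : Finset V, A.card = k ∧ ∑ v ∈ A, deg G v ≤ edgeCount G}

/-- The number of edges of the subgraph induced on a set of vertices. -/
noncomputable def inducedEdgeCount (G : SimpleGraph V) (A : Set V) : ℕ :=
  (SimpleGraph.induce A G).edgeSet.ncard

end AnnPaper

theorem Finset.exists_injective_of_card_le_card_biUnion_add {ι α : Type*} [Fintype ι]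
    [DecidableEq α] (t : ι → Finset α) (d : ℕ) (h : ∀ s : Finset ι, #s ≤ #(s.biUnion t) + d) :
    ∃ s : Finset ι, Fintype.card ι ≤ #s + d ∧
      ∃ f : s → α, Function.Injective f ∧ ∀ i : s, f i ∈ t i := by
  classical
  -- Deficiency version of Hall's theorem: pad every `t i` with the same `d` new elements and apply
  -- Hall's theorem; at most `d` indices are sent to the padding.
  have hHall (s : Finset ι) :
      #s ≤ #(s.biUnion fun i => (t i).disjSum (univ : Finset (Fin d))) := by
    rcases s.eq_empty_or_nonempty with rfl | ⟨i, hi⟩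
    · simp
    have : s.biUnion (fun i => (t i).disjSum (univ : Finset (Fin d))) =
        (s.biUnion t).disjSum univ := by
      ext (a | j) <;> simp [show ∃ i, i ∈ s from ⟨i, hi⟩]
    rw [this, card_disjSum, card_univ, Fintype.card_fin]
    exact h s
  obtain ⟨g, hg_inj, hg_mem⟩ := (all_card_le_biUnion_card_iff_exists_injective _).1 hHall
  let s : Finset ι := {i | (g i).isLeft}
  refine ⟨s, ?_, fun i => (g i).getLeft (mem_filter.1 i.2).2, fun i j hij => ?_, fun i => ?_⟩
  · have : #sᶜ ≤ d := by
      simpa using card_le_card_of_injOn g (t := (∅ : Finset α).disjSum univ)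
        (fun i hi => by
          obtain ⟨j, hj⟩ := Sum.isRight_iff.1 (by simpa [s] using hi)
          simp [hj]) hg_inj.injOn
    have := card_add_card_compl s
    omega
  · have := congrArg (Sum.inl (β := Fin d)) hij
    simp only [Sum.inl_getLeft] at this
    exact Subtype.ext (hg_inj this)
  · rw [← inl_mem_disjSum (t := (univ : Finset (Fin d))), Sum.inl_getLeft]
    exact hg_mem i

theorem Sym2.one_add_ite_mem_sym2_le {V : Type*} [Fintype V] [DecidableEq V] {e : Sym2 V}
    (he : ¬ e.IsDiag) (A : Finset V) :
    1 + (if e ∈ A.sym2 then 1 else 0) ≤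
      #{v ∈ A | v ∈ e} + (if e ∈ Aᶜ.sym2 then 1 else 0) := by
  induction e using Sym2.ind with
  | _ a b =>
    have hab : a ≠ b := he
    by_cases ha : a ∈ A <;> by_cases hb : b ∈ A <;> simp [ha, hb, filter_or, filter_eq', hab]

theorem le_two_add_sub_two_sqrt_of_quadratic_nonneg {x μ : ℝ} (hμ : -1 ≤ μ) (hxμ : x ≤ μ)
    (h : 0 ≤ x ^ 2 - (2 * μ + 4) * x + μ ^ 2) : x ≤ 2 + μ - 2 * Real.sqrt (1 + μ) := by
  set r := Real.sqrt (1 + μ)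
  have hr : 0 ≤ r := Real.sqrt_nonneg _
  have hr2 : r ^ 2 = 1 + μ := Real.sq_sqrt (by linarith)
  have hfactor : x ^ 2 - (2 * μ + 4) * x + μ ^ 2 = (x - (r - 1) ^ 2) * (x - (r + 1) ^ 2) := by
    linear_combination (2 * x - μ - r ^ 2 + 1) * hr2
  by_contra! hx
  have : (x - (r - 1) ^ 2) * (x - (r + 1) ^ 2) < 0 :=
    mul_neg_of_pos_of_neg (by nlinarith) (by nlinarith)
  linarith

namespace SimpleGraph

variable {V : Type*} [Fintype V] [DecidableEq V] (G : SimpleGraph V) [DecidableRel G.Adj]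

theorem four_mul_card_edgeFinset_inter_sym2_le (hG : G.IsBipartite) (B : Finset V) :
    4 * #(G.edgeFinset ∩ B.sym2) ≤ #B ^ 2 := by
  have h := IsBipartite.four_mul_encard_edgeSet_le
    (Colorable.of_hom (Embedding.induce (B : Set V)).toHom hG)
  rw [← coe_edgeFinset, Set.encard_coe_eq_coe_finsetCard, ENat.card_eq_coe_natCard,
    Nat.card_coe_set_eq, Set.ncard_coe_finset] at h
  rw [← filter_edgeFinset_toFinset_subset, card_filter_edgeFinset_toFinset_subset]
  exact_mod_cast h

theorem sum_degree_eq_sum_card_filter_mem (A : Finset V) :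
    ∑ v ∈ A, G.degree v = ∑ e ∈ G.edgeFinset, #{v ∈ A | v ∈ e} := by
  simp_rw [← card_incidenceFinset_eq_degree, incidenceFinset_eq_filter]
  exact sum_card_bipartiteAbove_eq_sum_card_bipartiteBelow _

theorem card_edgeFinset_inter_sym2_le_compl (A : Finset V)
    (hA : ∑ v ∈ A, G.degree v ≤ #G.edgeFinset) :
    #(G.edgeFinset ∩ A.sym2) ≤ #(G.edgeFinset ∩ Aᶜ.sym2) := by
  have key := sum_le_sum fun e (he : e ∈ G.edgeFinset) =>
    Sym2.one_add_ite_mem_sym2_le (G.not_isDiag_of_mem_edgeFinset he) A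
  rw [sum_add_distrib, sum_add_distrib, ← sum_degree_eq_sum_card_filter_mem] at key
  simp only [sum_const, smul_eq_mul, mul_one, sum_boole, Nat.cast_id, filter_mem_eq_inter] at key
  omega

end SimpleGraph

namespace AnnPaper

variable {V : Type*} [Fintype V] (G : SimpleGraph V)

theorem card_le_indepNum {s : Finset V} (hs : IsIndepFinset G s) : #s ≤ indepNum G :=
  le_csSup ⟨Fintype.card V, by rintro _ ⟨t, -, rfl⟩; exact card_le_univ t⟩ ⟨s, hs, rfl⟩

theorem card_le_matchNum {s : Finset (Sym2 V)} (hs : IsMatchingFinset G s) :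
    #s ≤ matchNum G := by
  classical
  exact le_csSup ⟨Fintype.card (Sym2 V), by rintro _ ⟨t, -, rfl⟩; exact card_le_univ t⟩
    ⟨s, hs, rfl⟩

theorem card_le_matchNum_of_injective {κ : Type*} [Fintype κ] (u v : κ → V)
    (hadj : ∀ k, G.Adj (u k) (v k)) (hu : Function.Injective u) (hv : Function.Injective v)
    (huv : ∀ k k', u k ≠ v k') : Fintype.card κ ≤ matchNum G := by
  classical
  have hinj : Function.Injective fun k => s(u k, v k) := fun k k' h => by
    rcases Sym2.eq_iff.1 h with ⟨h, -⟩ | ⟨h, -⟩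
    · exact hu h
    · exact absurd h (huv k k')
  refine card_univ (α := κ) ▸ card_image_of_injective univ hinj ▸ card_le_matchNum G ⟨?_, ?_⟩
  · rw [coe_image]
    rintro _ ⟨k, -, rfl⟩
    exact hadj k
  · simp only [mem_image, mem_univ, true_and]
    rintro _ ⟨k, rfl⟩ _ ⟨k', rfl⟩ hne w hw hw'
    have hkk' : k ≠ k' := fun h => hne (h ▸ rfl)
    rcases Sym2.mem_iff.1 hw with rfl | rfl <;> rcases Sym2.mem_iff.1 hw' with h | h
    exacts [hkk' (hu h), huv k k' h, huv k' k h.symm, hkk' (hv h)]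

section

variable [DecidableRel G.Adj]

theorem deg_eq_degree (v : V) : deg G v = G.degree v := by
  rw [deg, ← SimpleGraph.card_neighborFinset_eq_degree, SimpleGraph.neighborFinset_def,
    Set.ncard_eq_toFinset_card']

theorem edgeCount_eq_card_edgeFinset : edgeCount G = #G.edgeFinset := by
  rw [edgeCount, SimpleGraph.edgeFinset, Set.ncard_eq_toFinset_card']

theorem exists_card_eq_annNum :
    ∃ A : Finset V, #A = annNum G ∧ ∑ v ∈ A, G.degree v ≤ #G.edgeFinset := by
  obtain ⟨A, hA, hsum⟩ :
      annNum G ∈ {k | ∃ A : Finset V, #A = k ∧ ∑ v ∈ A, deg G v ≤ edgeCount G} :=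
    Nat.sSup_mem ⟨0, ∅, by simp⟩ ⟨Fintype.card V, by rintro _ ⟨A, rfl, -⟩; exact card_le_univ A⟩
  simp only [deg_eq_degree, edgeCount_eq_card_edgeFinset] at hsum
  exact ⟨A, hA, hsum⟩

theorem card_le_matchNum_add_of_isIndepFinset [DecidableEq V] {X : Finset V}
    (hX : IsIndepFinset G X) (d : ℕ)
    (hd : ∀ S ⊆ X, #S ≤ #(S.biUnion fun v => G.neighborFinset v) + d) :
    #X ≤ matchNum G + d := by
  obtain ⟨s, hs, f, hf_inj, hf_adj⟩ := exists_injective_of_card_le_card_biUnion_add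
      (fun x : X => G.neighborFinset x) d fun s => by
    have := hd (s.image Subtype.val) (image_subset_iff.2 fun x _ => x.2)
    rwa [card_image_of_injective _ Subtype.val_injective, image_biUnion] at this
  have hμ : #s ≤ matchNum G := by
    simpa using card_le_matchNum_of_injective G (fun i : s => (i : V)) f
      (fun i => (G.mem_neighborFinset _ _).1 (hf_adj i))
      (Subtype.val_injective.comp Subtype.val_injective) hf_inj
      fun i j h => hX _ (j : X).2 _ (h ▸ (i : X).2) ((G.mem_neighborFinset _ _).1 (hf_adj j))
  rw [Fintype.card_coe] at hs
  omega

theorem card_add_card_sdiff_le_indepNum [DecidableEq V] {S T : Finset V}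
    (hS : IsIndepFinset G S) (hT : IsIndepFinset G T) (hST : Disjoint S T) :
    #S + #(T \ S.biUnion fun v => G.neighborFinset v) ≤ indepNum G := by
  rw [← card_union_of_disjoint (hST.mono_right sdiff_subset)]
  refine card_le_indepNum G ?_
  simp only [IsIndepFinset, mem_union, mem_sdiff, mem_biUnion, SimpleGraph.mem_neighborFinset,
    not_exists, not_and]
  rintro a (ha | ⟨haT, ha⟩) b (hb | ⟨hbT, hb⟩) hab
  exacts [hS a ha b hb hab, hb a ha hab, ha b hb hab.symm, hT a haT b hbT hab]

theorem card_le_indepNum_add_card_edgeFinset_inter_sym2 [DecidableEq V] (A : Finset V) :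
    #A ≤ indepNum G + #(G.edgeFinset ∩ A.sym2) := by
  let C : Finset V := (G.edgeFinset ∩ A.sym2).image fun e => e.out.1
  have hindep : IsIndepFinset G (A \ C) := by
    intro a ha b hb hab
    have he : s(a, b) ∈ G.edgeFinset ∩ A.sym2 := by
      simp [hab, (mem_sdiff.1 ha).1, (mem_sdiff.1 hb).1]
    rcases Sym2.mem_iff.1 (s(a, b).out_fst_mem) with h | h
    · exact (mem_sdiff.1 ha).2 (h ▸ mem_image_of_mem _ he)
    · exact (mem_sdiff.1 hb).2 (h ▸ mem_image_of_mem _ he)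
  calc #A ≤ #(A \ C) + #C := card_le_card_sdiff_add_card
    _ ≤ indepNum G + #(G.edgeFinset ∩ A.sym2) :=
      add_le_add (card_le_indepNum G hindep) card_image_le

end

theorem card_le_indepNum_add_matchNum (hG : G.Colorable 2) :
    Fintype.card V ≤ indepNum G + matchNum G := by
  classical
  obtain ⟨C⟩ := hG
  have hclass (c : Fin 2) : IsIndepFinset G {v | C v = c} := by
    simp only [IsIndepFinset, mem_filter, mem_univ, true_and]
    rintro a rfl b hb hab
    exact C.valid hab hb.symm
  set X : Finset V := {v | C v = 0}
  set Y : Finset V := {v | C v = 1}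
  have hcard : Fintype.card V = #X + #Y := by
    rw [← card_univ, card_eq_sum_card_fiberwise (t := univ) (f := C) (by simp), Fin.sum_univ_two]
  have hX : IsIndepFinset G X := hclass 0
  have hY : IsIndepFinset G Y := hclass 1
  have hXY : Disjoint X Y := disjoint_filter.2 fun _ _ h => h ▸ by decide
  -- If `S ⊆ X` maximises the deficiency `d = #S - #N(S)`, then `X` has a matching of size
  -- `#X - d`, and `S ∪ (Y \ N(S))` is an independent set of size at least `#Y + d`.
  obtain ⟨S, hSX, hS_max⟩ := X.powerset.exists_max_image
    (fun S => (#S : ℤ) - #(S.biUnion fun v => G.neighborFinset v)) ⟨∅, empty_mem_powerset X⟩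
  rw [mem_powerset] at hSX
  have hS_nonneg := hS_max ∅ (empty_mem_powerset X)
  have hμ := card_le_matchNum_add_of_isIndepFinset G hX
    (#S - #(S.biUnion fun v => G.neighborFinset v)) fun S' hS' => by
      have := hS_max S' (mem_powerset.2 hS')
      omega
  have hα := card_add_card_sdiff_le_indepNum G (fun a ha b hb => hX a (hSX ha) b (hSX hb)) hY
    (hXY.mono_left hSX)
  have := le_card_sdiff (S.biUnion fun v => G.neighborFinset v) Y
  simp only [card_empty, biUnion_empty, Nat.cast_zero, sub_zero] at hS_nonneg
  omega

theorem stmt14 {V : Type*} [Fintype V] (G : SimpleGraph V) (hbip : G.Colorable 2) :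
    ((annNum G : ℝ) - (indepNum G : ℝ)) ^ 2 -
        (2 * (matchNum G : ℝ) + 4) * ((annNum G : ℝ) - (indepNum G : ℝ)) +
        (matchNum G : ℝ) ^ 2 ≥ 0 ∧
      (annNum G : ℝ) - (indepNum G : ℝ) ≤
        2 + (matchNum G : ℝ) - 2 * Real.sqrt (1 + (matchNum G : ℝ)) := by
  classical
  obtain ⟨A, hA_card, hA_deg⟩ := exists_card_eq_annNum G
  have hKonig := card_le_indepNum_add_matchNum G hbip
  have hA_indep := card_le_indepNum_add_card_edgeFinset_inter_sym2 G A
  have hA_edges : 4 * #(G.edgeFinset ∩ A.sym2) ≤ #Aᶜ ^ 2 :=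
    (Nat.mul_le_mul_left 4 (G.card_edgeFinset_inter_sym2_le_compl A hA_deg)).trans
      (G.four_mul_card_edgeFinset_inter_sym2_le hbip Aᶜ)
  have hA_compl := card_compl_add_card A
  rw [hA_card] at hA_indep hA_compl
  rify at hKonig hA_indep hA_edges hA_compl
  set x : ℝ := annNum G - indepNum G
  have hc : (#Aᶜ : ℝ) ≤ matchNum G - x := by linarith
  have hxμ : x ≤ matchNum G := by linarith [(#Aᶜ).cast_nonneg (α := ℝ)]
  have hquad : 0 ≤ x ^ 2 - (2 * (matchNum G : ℝ) + 4) * x + (matchNum G : ℝ) ^ 2 := by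
    nlinarith [pow_le_pow_left₀ (Nat.cast_nonneg _) hc 2]
  have hμ : (-1 : ℝ) ≤ matchNum G := by linarith [(matchNum G).cast_nonneg (α := ℝ)]
  exact ⟨hquad.ge, le_two_add_sub_two_sqrt_of_quadratic_nonneg hμ hxμ hquad⟩

end AnnPaper
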